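/- arXiv:2204.14051 — 3 statements merged into one kernel-verified Lean document; each statement's English description precedes it below -/
import Mathlib

section
/- (Equilibrium verification for contests with general prizes only, Theorem 2.) Let n ≥ 2, let H : [0,1] → [0,1] be continuously differentiable, strictly increasing, with H(0) = 0, H(1) = 1, and derivative h. Let w_1 ≥ w_2 ≥ … ≥ w_n ≥ 0 be prizes. Define p_j(b) = C(n−1, j−1) · H(b)^{n−j} (1−H(b))^{j−1}, f^H_{n−1,j}(y) = ((n−1)!/((j−1)!(n−1−j)!)) H(y)^{n−1−j} (1−H(y))^{j−1} h(y), and the strategy α(v) = Σ_{j=1}^{n−1} (w_j − w_{j+1}) ∫_0^v y f^H_{n−1,j}(y) dy. Then for all v, b ∈ [0,1]: v · Σ_{j=1}^{n} w_j p_j(b) − α(b) ≤ v · Σ_{j=1}^{n} w_j p_j(v) − α(v). That is, an agent of ability v maximizes her expected utility (expected prize value scaled by v minus output) by producing output α(v) rather than mimicking any other type b. -/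
open scoped Nat

/-- Density of the `j`-th highest order statistic out of `m` i.i.d. samples from `H`
(with density `h`): `f^H_{m,j}(y) = (m!/((j−1)!(m−j)!)) H(y)^{m−j} (1−H(y))^{j−1} h(y)`. -/
noncomputable def orderDensity (H h : ℝ → ℝ) (m j : ℕ) (y : ℝ) : ℝ :=
  ((m ! : ℝ) / (((j-1)! : ℝ) * ((m-j)! : ℝ))) * (H y)^(m-j) * (1 - H y)^(j-1) * h y

/-- Probability that an agent producing output `α(b)` is ranked `j`-th among herself and
`n−1` i.i.d. competitors with ability distribution `H`:
`p_j(b) = C(n−1, j−1) H(b)^{n−j} (1−H(b))^{j−1}`. -/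
noncomputable def winProb (H : ℝ → ℝ) (n j : ℕ) (b : ℝ) : ℝ :=
  ((n-1).choose (j-1) : ℝ) * (H b)^(n-j) * (1 - H b)^(j-1)

/-- Equilibrium strategy `α(v) = Σ_{j=1}^{n−1} (w_j − w_{j+1}) ∫_0^v y f^H_{n−1,j}(y) dy`. -/
noncomputable def eqStrategy (H h : ℝ → ℝ) (n : ℕ) (w : ℕ → ℝ) (v : ℝ) : ℝ :=
  ∑ j ∈ Finset.Icc 1 (n-1), (w j - w (j+1)) * ∫ y in (0:ℝ)..v, y * orderDensity H h (n-1) j y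

/-! Abel summation writes the expected prize as `Σ_J (w_J - w_{J+1}) S_J + w_n`, where
`S_J = p_1 + ⋯ + p_J` is the probability of finishing among the top `J`, and `α` splits along
the same nonnegative weights. As a function of the output, `S_J` has derivative `f^H_{n-1,J} ≥ 0`,
so the `J`-th part of the utility loss from mimicking type `b` is
`∫_v^b (v - y) f^H_{n-1,J}(y) dy ≤ 0`. -/

open Finset

lemma sum_Icc_one_eq_sum_range {M : Type*} [AddCommMonoid M] (f : ℕ → M) (k : ℕ) :
    ∑ j ∈ Icc 1 k, f j = ∑ i ∈ range k, f (i + 1) := by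
  rw [range_eq_Ico, sum_Ico_add' f 0 k 1, zero_add, Ico_add_one_right_eq_Icc]

lemma sum_Icc_mul_eq_sum_sub_mul_sum_Icc {R : Type*} [CommRing R] (w p : ℕ → R) (n : ℕ) :
    ∑ j ∈ Icc 1 (n + 1), w j * p j
      = ∑ J ∈ Icc 1 n, (w J - w (J + 1)) * ∑ j ∈ Icc 1 J, p j
        + w (n + 1) * ∑ j ∈ Icc 1 (n + 1), p j := by
  induction n with
  | zero => simp
  | succ n ih =>
    rw [sum_Icc_succ_top (show 1 ≤ n + 1 + 1 by omega), ih,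
      sum_Icc_succ_top (show 1 ≤ n + 1 by omega)
        (fun J => (w J - w (J + 1)) * ∑ j ∈ Icc 1 J, p j),
      sum_Icc_succ_top (show 1 ≤ n + 1 + 1 by omega) p]
    ring

/-- Since `(k + 1) * C(m, k + 1) = (m - k) * C(m, k)`, the derivatives of the summands
telescope. -/
lemma hasDerivAt_sum_range_choose_mul_pow (m K : ℕ) (t : ℝ) :
    HasDerivAt (fun s => ∑ k ∈ range (K + 1), (m.choose k : ℝ) * s ^ (m - k) * (1 - s) ^ k)
      ((m.choose K : ℝ) * (m - K : ℕ) * t ^ (m - K - 1) * (1 - t) ^ K) t := by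
  induction K with
  | zero =>
    simpa using hasDerivAt_pow m t
  | succ K ih =>
    simp_rw [sum_range_succ _ (K + 1)]
    have hterm :
        HasDerivAt (fun s => (m.choose (K + 1) : ℝ) * s ^ (m - (K + 1)) * (1 - s) ^ (K + 1))
        ((m.choose (K + 1) : ℝ) * ((m - (K + 1) : ℕ) * t ^ (m - (K + 1) - 1) * (1 - t) ^ (K + 1)
          + t ^ (m - (K + 1)) * ((K + 1 : ℕ) * (1 - t) ^ K * -1))) t := by
      simpa [mul_assoc] using
        (((hasDerivAt_pow _ t).mul (((hasDerivAt_id t).const_sub 1).pow (K + 1))).const_mul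
          (m.choose (K + 1) : ℝ))
    refine (ih.add hterm).congr_deriv ?_
    have hchoose : (m.choose (K + 1) : ℝ) * (K + 1 : ℕ) = m.choose K * (m - K : ℕ) := by
      exact_mod_cast Nat.choose_succ_right_eq m K
    rw [show m - (K + 1) = m - K - 1 by omega]
    linear_combination -(t ^ (m - K - 1) * (1 - t) ^ K) * hchoose

lemma factorial_div_factorial_mul_factorial_eq_choose_mul {m K : ℕ} (hK : K < m) :
    (m ! : ℝ) / (K ! * (m - (K + 1))! : ℝ) = m.choose K * (m - K : ℕ) := by
  have hchoose := Nat.choose_mul_factorial_mul_factorial hK.le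
  rw [show m - K = m - (K + 1) + 1 by omega, Nat.factorial_succ] at hchoose
  rw [div_eq_iff (by positivity), ← hchoose, show m - K = m - (K + 1) + 1 by omega]
  push_cast
  ring

lemma orderDensity_succ (H h : ℝ → ℝ) {m K : ℕ} (hK : K < m) (y : ℝ) :
    orderDensity H h m (K + 1) y
      = m.choose K * (m - K : ℕ) * H y ^ (m - K - 1) * (1 - H y) ^ K * h y := by
  rw [orderDensity, Nat.add_sub_cancel, factorial_div_factorial_mul_factorial_eq_choose_mul hK,
    Nat.sub_sub]

lemma orderDensity_nonneg {H h : ℝ → ℝ} {y : ℝ} (hH₀ : 0 ≤ H y) (hH₁ : H y ≤ 1)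
    (hh : 0 ≤ h y) (m j : ℕ) : 0 ≤ orderDensity H h m j y := by
  have : 0 ≤ 1 - H y := sub_nonneg.mpr hH₁
  unfold orderDensity
  positivity

lemma continuousOn_orderDensity {H h : ℝ → ℝ} {s : Set ℝ} (hH : ContinuousOn H s)
    (hh : ContinuousOn h s) (m j : ℕ) : ContinuousOn (orderDensity H h m j) s := by
  unfold orderDensity
  fun_prop

lemma sum_Icc_winProb (H : ℝ → ℝ) (n J : ℕ) (b : ℝ) :
    ∑ j ∈ Icc 1 J, winProb H n j b
      = ∑ k ∈ range J, ((n - 1).choose k : ℝ) * H b ^ (n - 1 - k) * (1 - H b) ^ k := by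
  rw [sum_Icc_one_eq_sum_range]
  refine sum_congr rfl fun k _ => ?_
  rw [winProb, Nat.add_sub_cancel, Nat.sub_sub, add_comm 1 k]

lemma sum_winProb_eq_one (H : ℝ → ℝ) {n : ℕ} (hn : 0 < n) (b : ℝ) :
    ∑ j ∈ Icc 1 n, winProb H n j b = 1 := by
  obtain ⟨m, rfl⟩ := Nat.exists_eq_add_one_of_ne_zero hn.ne'
  calc ∑ j ∈ Icc 1 (m + 1), winProb H (m + 1) j b = (1 - H b + H b) ^ m := by
        rw [sum_Icc_winProb, add_pow, Nat.add_sub_cancel]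
        exact sum_congr rfl fun k _ => by ring
    _ = 1 := by simp

lemma hasDerivWithinAt_sum_Icc_winProb {H h : ℝ → ℝ} {s : Set ℝ} {x : ℝ}
    (hH : HasDerivWithinAt H (h x) s x) {n J : ℕ} (hJ : 0 < J) (hJn : J < n) :
    HasDerivWithinAt (fun y => ∑ j ∈ Icc 1 J, winProb H n j y)
      (orderDensity H h (n - 1) J x) s x := by
  obtain ⟨K, rfl⟩ := Nat.exists_eq_add_one_of_ne_zero hJ.ne'
  simp_rw [sum_Icc_winProb]
  rw [orderDensity_succ H h (by omega)]
  exact (hasDerivAt_sum_range_choose_mul_pow (n - 1) K (H x)).comp_hasDerivWithinAt x hH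

open intervalIntegral in
lemma integral_sub_mul_nonpos {f : ℝ → ℝ} {v b : ℝ}
    (hf : ∀ y ∈ Set.uIcc v b, 0 ≤ f y) :
    ∫ y in v..b, (v - y) * f y ≤ 0 := by
  rcases le_total v b with hvb | hbv
  · rw [← neg_nonneg, ← integral_neg]
    refine integral_nonneg hvb fun y hy => ?_
    have := hf y (Set.Icc_subset_uIcc hy)
    nlinarith [hy.1]
  · rw [integral_symm, neg_nonpos]
    refine integral_nonneg hbv fun y hy => ?_
    have := hf y (Set.Icc_subset_uIcc' hy)
    nlinarith [hy.2]

open intervalIntegral in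
lemma mul_sub_integral_mul_le {S f : ℝ → ℝ} {a c v b : ℝ}
    (hS : ∀ x ∈ Set.Icc a c, HasDerivWithinAt S (f x) (Set.Icc a c) x)
    (hf : ContinuousOn f (Set.Icc a c)) (hf₀ : ∀ x ∈ Set.Icc a c, 0 ≤ f x)
    (hv : v ∈ Set.Icc a c) (hb : b ∈ Set.Icc a c) :
    v * S b - ∫ y in a..b, y * f y ≤ v * S v - ∫ y in a..v, y * f y := by
  have hvb : Set.uIcc v b ⊆ Set.Icc a c := Set.uIcc_subset_Icc hv hb
  have hyf : ContinuousOn (fun y => y * f y) (Set.Icc a c) := continuousOn_id.mul hf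
  have hyf_int :
      ∀ u ∈ Set.Icc a c, IntervalIntegrable (fun y => y * f y) MeasureTheory.volume a u :=
    fun u hu => (hyf.mono (Set.uIcc_subset_Icc ⟨le_rfl, hv.1.trans hv.2⟩ hu)).intervalIntegrable
  have hf_int : IntervalIntegrable f MeasureTheory.volume v b := (hf.mono hvb).intervalIntegrable
  have ftc : S b - S v = ∫ y in v..b, f y := by
    refine (integral_eq_sub_of_hasDeriv_right
      (fun x hx => (hS x (hvb hx)).continuousWithinAt.mono hvb) (fun x hx => ?_) hf_int).symm
    have hx' : x ∈ Set.Ioo a c :=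
      ⟨lt_of_le_of_lt (le_min hv.1 hb.1) hx.1, lt_of_lt_of_le hx.2 (max_le hv.2 hb.2)⟩
    exact ((hS x (Set.Ioo_subset_Icc_self hx')).hasDerivAt
      (Icc_mem_nhds hx'.1 hx'.2)).hasDerivWithinAt
  calc v * S b - ∫ y in a..b, y * f y
      = (v * S v - ∫ y in a..v, y * f y)
          + (v * (S b - S v) - ((∫ y in a..b, y * f y) - ∫ y in a..v, y * f y)) := by ring
    _ = (v * S v - ∫ y in a..v, y * f y) + ∫ y in v..b, (v - y) * f y := by
      rw [ftc, integral_interval_sub_left (hyf_int b hb) (hyf_int v hv), ← integral_const_mul,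
        ← integral_sub (hf_int.const_mul v) (hyf.mono hvb).intervalIntegrable]
      simp_rw [sub_mul]
    _ ≤ v * S v - ∫ y in a..v, y * f y :=
      add_le_of_nonpos_right (integral_sub_mul_nonpos fun y hy => hf₀ y (hvb hy))

lemma utility_eq_sum (H h : ℝ → ℝ) {n : ℕ} (hn : 0 < n) (w : ℕ → ℝ) (v b : ℝ) :
    v * ∑ j ∈ Icc 1 n, w j * winProb H n j b - eqStrategy H h n w b
      = ∑ J ∈ Icc 1 (n - 1), (w J - w (J + 1)) *
          (v * ∑ j ∈ Icc 1 J, winProb H n j b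
            - ∫ y in (0:ℝ)..b, y * orderDensity H h (n - 1) J y)
        + v * w n := by
  obtain ⟨m, rfl⟩ := Nat.exists_eq_add_one_of_ne_zero hn.ne'
  have hsplit : ∀ J, (w J - w (J + 1)) *
      (v * ∑ j ∈ Icc 1 J, winProb H (m + 1) j b
        - ∫ y in (0:ℝ)..b, y * orderDensity H h m J y)
        = v * ((w J - w (J + 1)) * ∑ j ∈ Icc 1 J, winProb H (m + 1) j b)
          - (w J - w (J + 1)) * ∫ y in (0:ℝ)..b, y * orderDensity H h m J y := fun J => by ring
  rw [eqStrategy, Nat.add_sub_cancel, sum_Icc_mul_eq_sum_sub_mul_sum_Icc,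
    sum_winProb_eq_one H hn]
  simp_rw [hsplit, sum_sub_distrib, ← mul_sum]
  ring

theorem equilibrium_general_prizes_general (n : ℕ) (hn : 2 ≤ n) (H h : ℝ → ℝ)
    (hmono : StrictMonoOn H (Set.Icc (0:ℝ) 1))
    (hH0 : H 0 = 0) (hH1 : H 1 = 1)
    (hderiv : ∀ v ∈ Set.Icc (0:ℝ) 1, HasDerivWithinAt H (h v) (Set.Icc (0:ℝ) 1) v)
    (hcont : ContinuousOn h (Set.Icc (0:ℝ) 1))
    (w : ℕ → ℝ)
    (hw : ∀ j, 1 ≤ j → j < n → w (j+1) ≤ w j) :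
    ∀ v ∈ Set.Icc (0:ℝ) 1, ∀ b ∈ Set.Icc (0:ℝ) 1,
      v * (∑ j ∈ Finset.Icc 1 n, w j * winProb H n j b) - eqStrategy H h n w b
        ≤ v * (∑ j ∈ Finset.Icc 1 n, w j * winProb H n j v) - eqStrategy H h n w v := by
  intro v hv b hb
  have hH : ∀ x ∈ Set.Icc (0:ℝ) 1, 0 ≤ H x ∧ H x ≤ 1 := fun x hx =>
    ⟨hH0 ▸ hmono.monotoneOn (Set.left_mem_Icc.2 zero_le_one) hx hx.1,
      hH1 ▸ hmono.monotoneOn hx (Set.right_mem_Icc.2 zero_le_one) hx.2⟩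
  have hh : ∀ x ∈ Set.Icc (0:ℝ) 1, 0 ≤ h x := fun x hx =>
    (hderiv x hx).nonneg_of_monotoneOn
      (uniqueDiffWithinAt_iff_accPt.mp (uniqueDiffOn_Icc zero_lt_one x hx)) hmono.monotoneOn
  have hJ_incentive : ∀ J ∈ Icc 1 (n - 1),
      v * ∑ j ∈ Icc 1 J, winProb H n j b - ∫ y in (0:ℝ)..b, y * orderDensity H h (n - 1) J y
        ≤ v * ∑ j ∈ Icc 1 J, winProb H n j v
          - ∫ y in (0:ℝ)..v, y * orderDensity H h (n - 1) J y :=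
    fun J hJ => mul_sub_integral_mul_le
      (fun x hx => hasDerivWithinAt_sum_Icc_winProb (hderiv x hx) (mem_Icc.1 hJ).1 (by grind))
      (continuousOn_orderDensity (fun x hx => (hderiv x hx).continuousWithinAt) hcont _ _)
      (fun x hx => orderDensity_nonneg (hH x hx).1 (hH x hx).2 (hh x hx) _ _) hv hb
  rw [utility_eq_sum H h (by omega), utility_eq_sum H h (by omega)]
  gcongr ∑ J ∈ _, _ * ?_ + _ with J hJ
  · exact sub_nonneg.2 (hw J (mem_Icc.1 hJ).1 (by grind))
  · exact hJ_incentive J hJ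

/-- Theorem 2, equilibrium verification for general prizes only: with abilities
i.i.d. from `H` and prizes `w_1 ≥ … ≥ w_n ≥ 0`, an agent of ability `v` maximizes her expected
utility `v·Σ_j w_j p_j(b) − α(b)` by choosing `b = v`. -/
theorem equilibrium_general_prizes (n : ℕ) (hn : 2 ≤ n) (H h : ℝ → ℝ)
    (hmono : StrictMonoOn H (Set.Icc (0:ℝ) 1))
    (hH0 : H 0 = 0) (hH1 : H 1 = 1)
    (hderiv : ∀ v ∈ Set.Icc (0:ℝ) 1, HasDerivWithinAt H (h v) (Set.Icc (0:ℝ) 1) v)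
    (hcont : ContinuousOn h (Set.Icc (0:ℝ) 1))
    (w : ℕ → ℝ)
    (hw : ∀ j, 1 ≤ j → j < n → w (j+1) ≤ w j) (hwn : 0 ≤ w n) :
    ∀ v ∈ Set.Icc (0:ℝ) 1, ∀ b ∈ Set.Icc (0:ℝ) 1,
      v * (∑ j ∈ Finset.Icc 1 n, w j * winProb H n j b) - eqStrategy H h n w b
        ≤ v * (∑ j ∈ Finset.Icc 1 n, w j * winProb H n j v) - eqStrategy H h n w v :=
  equilibrium_general_prizes_general n hn H h hmono hH0 hH1 hderiv hcont w hw
end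

section
/- (Example 1, argmax claim.) Let n ≥ 3 and for 1 ≤ j ≤ n−1 define g(j) = (1/j) ∫_0^1 y (1−y)^{n−1} · ((n−1)!/((j−1)!(n−1−j)!)) y^{n−1−j} (1−y)^{j−1} dy. Then g(j) = (n−1)! (n−j) (n+j−2)! / (j! (2n−1)!), and g attains its maximum over j ∈ {1, …, n−1} uniquely at j = n−2. -/
open scoped Nat

/-- The objective of Example 1 when the unit budget is split equally among the top `j` prizes:
`g(j) = (1/j) ∫_0^1 y (1−y)^{n−1} f^{unif}_{n−1,j}(y) dy`, where
`f^{unif}_{n−1,j}(y) = ((n−1)!/((j−1)!(n−1−j)!)) y^{n−1−j}(1−y)^{j−1}`. -/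
noncomputable def exObj (n j : ℕ) : ℝ :=
  (1/(j:ℝ)) * ∫ y in (0:ℝ)..1,
    y * (1-y)^(n-1) * (((n-1)! : ℝ) / (((j-1)! : ℝ) * ((n-1-j)! : ℝ)) * y^(n-1-j) * (1-y)^(j-1))

/-!
The integrand of `g(j)` is a multiple of `y^(n-j) (1-y)^(n+j-2)`, so `g(j)` is a Beta integral and
equals `(n-1)!/(2n-1)!` times `F(j) = (n-j)(n+j-2)!/j!`. Consecutive values satisfy
`(n-j)(j+1) F(j+1) = (n-j-1)(n+j-1) F(j)`, and
`(n-j-1)(n+j-1) - (n-j)(j+1) = (n-1)(n-2-j) - 1`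
is positive for `j ≤ n-3` and equals `-1` at `j = n-2`: `F` increases strictly up to `n-2` and
then drops.
-/

theorem integral_pow_mul_one_sub_pow (a b : ℕ) :
    ∫ x in (0:ℝ)..1, x ^ a * (1 - x) ^ b = (a ! * b ! / (a + b + 1)! : ℝ) := by
  have hGamma : ∀ k : ℕ, Complex.Gamma (k + 1) = k ! := fun k => by
    exact_mod_cast Complex.Gamma_nat_eq_factorial k
  have h := Complex.betaIntegral_eq_Gamma_mul_div (a + 1) (b + 1)
    (by simp only [Complex.add_re, Complex.natCast_re, Complex.one_re]; positivity)
    (by simp only [Complex.add_re, Complex.natCast_re, Complex.one_re]; positivity)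
  rw [show (a + 1 : ℂ) + (b + 1) = ((a + b + 1 : ℕ) : ℂ) + 1 by push_cast; ring,
    hGamma, hGamma, hGamma, Complex.betaIntegral] at h
  simp only [add_sub_cancel_right, Complex.cpow_natCast] at h
  apply Complex.ofReal_injective
  rw [← intervalIntegral.integral_ofReal]
  push_cast at h ⊢
  exact h

noncomputable def exObjFactor (n j : ℕ) : ℝ := (n - j) * (n + j - 2)! / j !

variable {n j : ℕ}

theorem exObj_eq_mul_exObjFactor (hj : 1 ≤ j) (hjn : j ≤ n - 1) :
    exObj n j = (n - 1)! / (2 * n - 1)! * exObjFactor n j := by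
  have hintegrand : ∀ y : ℝ,
      y * (1-y)^(n-1) * (((n-1)! : ℝ) / (((j-1)! : ℝ) * ((n-1-j)! : ℝ)) * y^(n-1-j) * (1-y)^(j-1))
        = (n-1)! / ((j-1)! * (n-1-j)!) * (y ^ (n - j) * (1 - y) ^ (n + j - 2)) := fun y => by
    rw [show n - j = n - 1 - j + 1 by omega, show n + j - 2 = n - 1 + (j - 1) by omega]
    ring
  have hj! : (j ! : ℝ) = j * (j - 1)! := by
    exact_mod_cast (Nat.mul_factorial_pred (by omega)).symm
  have hnj! : ((n - j)! : ℝ) = (n - j) * (n - 1 - j)! := by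
    rw [show n - 1 - j = n - j - 1 by omega, ← Nat.cast_sub (by omega)]
    exact_mod_cast (Nat.mul_factorial_pred (by omega)).symm
  simp only [exObj, hintegrand, intervalIntegral.integral_const_mul,
    integral_pow_mul_one_sub_pow, show n - j + (n + j - 2) + 1 = 2 * n - 1 by omega,
    exObjFactor, hj!, hnj!]
  field_simp

theorem exObjFactor_pos (h : j < n) : 0 < exObjFactor n j := by
  have : (0:ℝ) < n - j := sub_pos.2 (by exact_mod_cast h)
  unfold exObjFactor
  positivity

theorem exObjFactor_succ_mul (h : 2 ≤ n + j) :
    (n - j) * (j + 1) * exObjFactor n (j + 1) = (n - j - 1) * (n + j - 1) * exObjFactor n j := by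
  have h! : ((n + (j + 1) - 2)! : ℝ) = (n + j - 1) * (n + j - 2)! := by
    rw [show n + (j + 1) - 2 = n + j - 2 + 1 by omega, Nat.factorial_succ]
    push_cast [Nat.cast_sub h]
    ring
  simp only [exObjFactor, h!, Nat.factorial_succ j]
  push_cast
  field_simp
  ring

theorem exObjFactor_lt_succ (hj : 1 ≤ j) (h : j + 3 ≤ n) :
    exObjFactor n j < exObjFactor n (j + 1) := by
  have hj' : (1 : ℝ) ≤ j := by exact_mod_cast hj
  have hn' : (j : ℝ) + 3 ≤ n := by exact_mod_cast h
  have hp : (0 : ℝ) < (n - j) * (j + 1) := by nlinarith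
  have hpq : (n - j) * (j + 1) < ((n - j - 1) * (n + j - 1) : ℝ) := by nlinarith
  refine lt_of_mul_lt_mul_left ?_ hp.le
  rw [exObjFactor_succ_mul (by omega)]
  exact mul_lt_mul_of_pos_right hpq (exObjFactor_pos (by omega))

theorem exObjFactor_succ_lt (h : j + 2 = n) :
    exObjFactor n (j + 1) < exObjFactor n j := by
  have hn' : (j : ℝ) + 2 = n := by exact_mod_cast h
  have hp : (0 : ℝ) < (n - j) * (j + 1) := by nlinarith
  have hqp : ((n - j - 1) * (n + j - 1) : ℝ) < (n - j) * (j + 1) := by nlinarith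
  refine lt_of_mul_lt_mul_left ?_ hp.le
  rw [exObjFactor_succ_mul (by omega)]
  exact mul_lt_mul_of_pos_right hqp (exObjFactor_pos (by omega))

theorem exObjFactor_strictMonoOn (n : ℕ) : StrictMonoOn (exObjFactor n) (Set.Icc 1 (n - 2)) :=
  strictMonoOn_of_lt_add_one Set.ordConnected_Icc fun _ _ hj hj1 =>
    exObjFactor_lt_succ hj.1 (by have := hj1.2; omega)

/-- Example 1, argmax claim: `g(j) = (n−1)!(n−j)(n+j−2)!/(j!(2n−1)!)` and `g`
attains its maximum over `{1,…,n−1}` uniquely at `j = n−2`. -/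
theorem example_one_argmax (n : ℕ) (hn : 3 ≤ n) :
    (∀ j, 1 ≤ j → j ≤ n - 1 →
      exObj n j = ((n-1)! : ℝ) * ((n:ℝ) - j) * ((n+j-2)! : ℝ) / ((j ! : ℝ) * ((2*n-1)! : ℝ))) ∧
    ∀ j, 1 ≤ j → j ≤ n - 1 → j ≠ n - 2 → exObj n j < exObj n (n-2) := by
  refine ⟨fun j hj hjn => ?_, fun j hj hjn hne => ?_⟩
  · rw [exObj_eq_mul_exObjFactor hj hjn, exObjFactor]
    ring
  · rw [exObj_eq_mul_exObjFactor hj hjn, exObj_eq_mul_exObjFactor (by omega) (by omega)]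
    refine mul_lt_mul_of_pos_left ?_ (by positivity)
    rcases Nat.lt_or_gt_of_ne hne with hlt | _
    · exact exObjFactor_strictMonoOn n ⟨hj, hlt.le⟩ ⟨by omega, le_rfl⟩ hlt
    · obtain rfl : j = n - 2 + 1 := by omega
      exact exObjFactor_succ_lt (by omega)
end

section
/- (Appendix example, monotonicity and bound.) Let n ≥ 2 and define, for μ ∈ (0,1], Φ(μ) = ( (n−1) − (1−μ)(n+1) + (1−μ)^n (2(1−μ) + (n+1)μ) ) / ( n(n+1) μ ). Then Φ is nondecreasing on (0,1], Φ(μ) → 0 as μ → 0⁺, Φ(1) = (n−1)/(n(n+1)), and consequently Φ(μ) ≤ (n−1)/(n(n+1)) for all μ ∈ (0,1]. -/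
/-!
With `y = 1 - μ`, the numerator of `Φ(μ)` is `μ` times
`∑_{k=0}^{n} (1 - y^k)(1 - y^(n-k)) = (n+1)(1 + y^n) - 2 ∑_{k=0}^{n} y^k`
(the identity is the geometric sum `(1 - y) ∑_{k=0}^{n} y^k = 1 - y^(n+1)`).
So `n(n+1) Φ(μ)` is a polynomial in `μ`, a sum of products of nonnegative nondecreasing
functions of `μ ∈ [0,1]` that vanishes at `μ = 0`; the bound is the value at `μ = 1`.
-/

/-- Expected equilibrium output of a target-group agent under a target-group-specific
first prize of value `μ`, with uniform abilities:
`Φ(μ) = ((n−1) − (1−μ)(n+1) + (1−μ)^n (2(1−μ) + (n+1)μ)) / (n(n+1)μ)`. -/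
noncomputable def PhiOut (n : ℕ) (μ : ℝ) : ℝ :=
  (((n:ℝ) - 1) - (1 - μ) * ((n:ℝ) + 1) + (1 - μ)^n * (2 * (1 - μ) + ((n:ℝ) + 1) * μ))
    / ((n:ℝ) * ((n:ℝ) + 1) * μ)

open Finset Filter Topology

section OneSubPow

variable {R : Type*} [Ring R] [PartialOrder R] [IsOrderedRing R]

lemma one_sub_one_sub_pow_nonneg {x : R} (hx : x ∈ Set.Icc 0 1) (k : ℕ) :
    0 ≤ 1 - (1 - x) ^ k :=
  sub_nonneg.mpr (pow_le_one₀ (sub_nonneg.mpr hx.2) (sub_le_self 1 hx.1))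

lemma monotoneOn_one_sub_one_sub_pow (k : ℕ) :
    MonotoneOn (fun x : R ↦ 1 - (1 - x) ^ k) (Set.Icc 0 1) :=
  fun _ _ _ hb hab ↦ sub_le_sub_left
    (pow_le_pow_left₀ (sub_nonneg.mpr hb.2) (sub_le_sub_left hab 1) k) 1

end OneSubPow

namespace PhiOut

noncomputable def pairSum (n : ℕ) (μ : ℝ) : ℝ :=
  ∑ k ∈ range (n + 1), (1 - (1 - μ) ^ k) * (1 - (1 - μ) ^ (n - k))

lemma pairSum_eq (n : ℕ) (μ : ℝ) :
    pairSum n μ = (n + 1) * (1 + (1 - μ) ^ n) - 2 * ∑ k ∈ range (n + 1), (1 - μ) ^ k := by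
  set y := 1 - μ
  have hterm : ∀ k ∈ range (n + 1),
      (1 - y ^ k) * (1 - y ^ (n - k)) = (1 + y ^ n) - (y ^ k + y ^ (n - k)) := by
    intro k hk
    rw [← pow_mul_pow_sub y (Nat.lt_succ_iff.mp (mem_range.mp hk))]
    ring
  have hreflect : ∑ k ∈ range (n + 1), y ^ (n - k) = ∑ k ∈ range (n + 1), y ^ k := by
    simpa using sum_range_reflect (y ^ ·) (n + 1)
  rw [pairSum, sum_congr rfl hterm, sum_sub_distrib, sum_const, card_range, nsmul_eq_mul,
    sum_add_distrib, hreflect]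
  push_cast
  ring

lemma mul_pairSum (n : ℕ) (μ : ℝ) :
    μ * pairSum n μ =
      (n - 1) - (1 - μ) * (n + 1) + (1 - μ) ^ n * (2 * (1 - μ) + (n + 1) * μ) := by
  rw [pairSum_eq]
  linear_combination (-2) * mul_neg_geom_sum (1 - μ) (n + 1)

lemma pairSum_zero (n : ℕ) : pairSum n 0 = 0 := by
  simp [pairSum]

lemma continuous_pairSum (n : ℕ) : Continuous (pairSum n) := by
  unfold pairSum
  fun_prop

lemma monotoneOn_pairSum (n : ℕ) : MonotoneOn (pairSum n) (Set.Icc 0 1) :=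
  fun _ ha _ hb hab ↦ sum_le_sum fun k _ ↦
    ((monotoneOn_one_sub_one_sub_pow k).mul (monotoneOn_one_sub_one_sub_pow (n - k))
      (fun _ hμ ↦ one_sub_one_sub_pow_nonneg hμ k)
      (fun _ hμ ↦ one_sub_one_sub_pow_nonneg hμ (n - k))) ha hb hab

end PhiOut

open PhiOut

lemma PhiOut_eq_pairSum_div (n : ℕ) {μ : ℝ} (hμ : μ ≠ 0) :
    PhiOut n μ = pairSum n μ / (n * (n + 1)) := by
  rw [PhiOut, ← mul_pairSum, mul_comm μ, mul_div_mul_right _ _ hμ]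

lemma monotoneOn_PhiOut (n : ℕ) : MonotoneOn (PhiOut n) (Set.Ioc 0 1) := by
  intro a ha b hb hab
  rw [PhiOut_eq_pairSum_div n ha.1.ne', PhiOut_eq_pairSum_div n hb.1.ne']
  exact div_le_div_of_nonneg_right
    (monotoneOn_pairSum n (Set.Ioc_subset_Icc_self ha) (Set.Ioc_subset_Icc_self hb) hab)
    (by positivity)

lemma tendsto_PhiOut_nhdsGT_zero (n : ℕ) : Tendsto (PhiOut n) (𝓝[>] 0) (𝓝 0) := by
  have hcont : Tendsto (fun μ ↦ pairSum n μ / (n * (n + 1))) (𝓝[>] 0) (𝓝 0) :=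
    ((continuous_pairSum n).div_const _).tendsto' 0 0 (by simp [pairSum_zero])
      |>.mono_left nhdsWithin_le_nhds
  exact hcont.congr' (eventually_nhdsWithin_of_forall fun μ hμ ↦
    (PhiOut_eq_pairSum_div n (ne_of_gt hμ)).symm)

lemma PhiOut_one (n : ℕ) : PhiOut n 1 = (n - 1) / (n * (n + 1)) := by
  rcases n.eq_zero_or_pos with rfl | hn
  · simp [PhiOut]
  · simp [PhiOut, zero_pow hn.ne']

theorem group_specific_prize_monotone_bound_general (n : ℕ) :
    MonotoneOn (PhiOut n) (Set.Ioc (0:ℝ) 1) ∧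
    Filter.Tendsto (PhiOut n) (nhdsWithin 0 (Set.Ioi 0)) (nhds 0) ∧
    PhiOut n 1 = ((n:ℝ) - 1) / ((n:ℝ) * ((n:ℝ) + 1)) ∧
    ∀ μ ∈ Set.Ioc (0:ℝ) 1, PhiOut n μ ≤ ((n:ℝ) - 1) / ((n:ℝ) * ((n:ℝ) + 1)) := by
  refine ⟨monotoneOn_PhiOut n, tendsto_PhiOut_nhdsGT_zero n, PhiOut_one n, fun μ hμ ↦ ?_⟩
  rw [← PhiOut_one n]
  exact monotoneOn_PhiOut n hμ ⟨one_pos, le_rfl⟩ hμ.2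

/-- appendix example, monotonicity and bound: `Φ` is nondecreasing on `(0,1]`,
tends to `0` as `μ → 0⁺`, equals `(n−1)/(n(n+1))` at `μ = 1`, and hence is bounded by
`(n−1)/(n(n+1))` on `(0,1]`. -/
theorem group_specific_prize_monotone_bound (n : ℕ) (hn : 2 ≤ n) :
    MonotoneOn (PhiOut n) (Set.Ioc (0:ℝ) 1) ∧
    Filter.Tendsto (PhiOut n) (nhdsWithin 0 (Set.Ioi 0)) (nhds 0) ∧
    PhiOut n 1 = ((n:ℝ) - 1) / ((n:ℝ) * ((n:ℝ) + 1)) ∧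
    ∀ μ ∈ Set.Ioc (0:ℝ) 1, PhiOut n μ ≤ ((n:ℝ) - 1) / ((n:ℝ) * ((n:ℝ) + 1)) :=
  group_specific_prize_monotone_bound_general n
end
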